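/- arXiv:1909.13498 — 2 statements merged into one kernel-verified Lean document; each statement's English description precedes it below -/
import Mathlib

section
/- Let m : Fin 2 × Fin 2 × Fin 2 × Fin 2 → ℝ be nonnegative with total sum 1. Define the correlation functions E(x,y) = Σ_{i1,i2,j1,j2} (−1)^{i1+j1} m(i1,i2,j1,j2), E(x,y') = Σ (−1)^{i1+j2} m, E(x',y) = Σ (−1)^{i2+j1} m, E(x',y') = Σ (−1)^{i2+j2} m (indices valued in {0,1}). Then |E(x,y) − E(x,y') + E(x',y) + E(x',y')| ≤ 2. -/
theorem stmt_1 (m : Fin 2 × Fin 2 × Fin 2 × Fin 2 → ℝ)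
    (hnn : ∀ x, 0 ≤ m x) (hsum : ∑ x : Fin 2 × Fin 2 × Fin 2 × Fin 2, m x = 1) :
    |(∑ i1 : Fin 2, ∑ i2 : Fin 2, ∑ j1 : Fin 2, ∑ j2 : Fin 2,
        (-1 : ℝ) ^ ((i1 : ℕ) + (j1 : ℕ)) * m (i1, i2, j1, j2))
      - (∑ i1 : Fin 2, ∑ i2 : Fin 2, ∑ j1 : Fin 2, ∑ j2 : Fin 2,
        (-1 : ℝ) ^ ((i1 : ℕ) + (j2 : ℕ)) * m (i1, i2, j1, j2))
      + (∑ i1 : Fin 2, ∑ i2 : Fin 2, ∑ j1 : Fin 2, ∑ j2 : Fin 2,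
        (-1 : ℝ) ^ ((i2 : ℕ) + (j1 : ℕ)) * m (i1, i2, j1, j2))
      + (∑ i1 : Fin 2, ∑ i2 : Fin 2, ∑ j1 : Fin 2, ∑ j2 : Fin 2,
        (-1 : ℝ) ^ ((i2 : ℕ) + (j2 : ℕ)) * m (i1, i2, j1, j2))| ≤ 2 := by
  have h1 := hnn (0,0,0,0)
  have h2 := hnn (0,0,0,1)
  have h3 := hnn (0,0,1,0)
  have h4 := hnn (0,0,1,1)
  have h5 := hnn (0,1,0,0)
  have h6 := hnn (0,1,0,1)
  have h7 := hnn (0,1,1,0)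
  have h8 := hnn (0,1,1,1)
  have h9 := hnn (1,0,0,0)
  have h10 := hnn (1,0,0,1)
  have h11 := hnn (1,0,1,0)
  have h12 := hnn (1,0,1,1)
  have h13 := hnn (1,1,0,0)
  have h14 := hnn (1,1,0,1)
  have h15 := hnn (1,1,1,0)
  have h16 := hnn (1,1,1,1)
  rw [Fintype.sum_prod_type] at hsum
  simp only [Fintype.sum_prod_type, Fin.sum_univ_two, Fin.val_zero, Fin.val_one] at hsum ⊢
  norm_num at h1 h2 h3 h4 h5 h6 h7 h8 h9 h10 h11 h12 h13 h14 h15 h16 hsum ⊢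
  rw [abs_le]
  constructor <;> linarith
end

section
/- Let m : (Fin 2)^6 → ℝ be nonnegative with total sum 1. For indices (i1,i2,j1,j2,k1,k2), define S_xyy = Σ (−1)^{i1+j2+k2} m, S_yxy = Σ (−1)^{i2+j1+k2} m, S_yyx = Σ (−1)^{i2+j2+k1} m, and S_xxx = Σ (−1)^{i1+j1+k1} m. If S_xyy = S_yxy = S_yyx = −1, then S_xxx = −1. -/
theorem stmt_2 (m : Fin 2 → Fin 2 → Fin 2 → Fin 2 → Fin 2 → Fin 2 → ℝ)
    (hnn : ∀ i1 i2 j1 j2 k1 k2, 0 ≤ m i1 i2 j1 j2 k1 k2)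
    (hsum : ∑ i1 : Fin 2, ∑ i2 : Fin 2, ∑ j1 : Fin 2, ∑ j2 : Fin 2, ∑ k1 : Fin 2, ∑ k2 : Fin 2,
        m i1 i2 j1 j2 k1 k2 = 1)
    (hxyy : ∑ i1 : Fin 2, ∑ i2 : Fin 2, ∑ j1 : Fin 2, ∑ j2 : Fin 2, ∑ k1 : Fin 2, ∑ k2 : Fin 2,
        (-1 : ℝ) ^ ((i1 : ℕ) + (j2 : ℕ) + (k2 : ℕ)) * m i1 i2 j1 j2 k1 k2 = -1)
    (hyxy : ∑ i1 : Fin 2, ∑ i2 : Fin 2, ∑ j1 : Fin 2, ∑ j2 : Fin 2, ∑ k1 : Fin 2, ∑ k2 : Fin 2,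
        (-1 : ℝ) ^ ((i2 : ℕ) + (j1 : ℕ) + (k2 : ℕ)) * m i1 i2 j1 j2 k1 k2 = -1)
    (hyyx : ∑ i1 : Fin 2, ∑ i2 : Fin 2, ∑ j1 : Fin 2, ∑ j2 : Fin 2, ∑ k1 : Fin 2, ∑ k2 : Fin 2,
        (-1 : ℝ) ^ ((i2 : ℕ) + (j2 : ℕ) + (k1 : ℕ)) * m i1 i2 j1 j2 k1 k2 = -1) :
    ∑ i1 : Fin 2, ∑ i2 : Fin 2, ∑ j1 : Fin 2, ∑ j2 : Fin 2, ∑ k1 : Fin 2, ∑ k2 : Fin 2,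
        (-1 : ℝ) ^ ((i1 : ℕ) + (j1 : ℕ) + (k1 : ℕ)) * m i1 i2 j1 j2 k1 k2 = -1 := by
  simp only [Fin.sum_univ_two, Fin.isValue, Fin.val_zero, Fin.val_one] at *
  norm_num at hsum hxyy hyxy hyyx ⊢
  linarith [hnn 0 0 0 0 0 0, hnn 0 0 0 0 0 1, hnn 0 0 0 0 1 0, hnn 0 0 0 0 1 1, hnn 0 0 0 1 0 0, hnn 0 0 0 1 0 1, hnn 0 0 0 1 1 0, hnn 0 0 0 1 1 1, hnn 0 0 1 0 0 0, hnn 0 0 1 0 0 1, hnn 0 0 1 0 1 0, hnn 0 0 1 0 1 1, hnn 0 0 1 1 0 0, hnn 0 0 1 1 0 1, hnn 0 0 1 1 1 0, hnn 0 0 1 1 1 1, hnn 0 1 0 0 0 0, hnn 0 1 0 0 0 1, hnn 0 1 0 0 1 0, hnn 0 1 0 0 1 1, hnn 0 1 0 1 0 0, hnn 0 1 0 1 0 1, hnn 0 1 0 1 1 0, hnn 0 1 0 1 1 1, hnn 0 1 1 0 0 0, hnn 0 1 1 0 0 1, hnn 0 1 1 0 1 0, hnn 0 1 1 0 1 1,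 hnn 0 1 1 1 0 0, hnn 0 1 1 1 0 1, hnn 0 1 1 1 1 0, hnn 0 1 1 1 1 1, hnn 1 0 0 0 0 0, hnn 1 0 0 0 0 1, hnn 1 0 0 0 1 0, hnn 1 0 0 0 1 1, hnn 1 0 0 1 0 0, hnn 1 0 0 1 0 1, hnn 1 0 0 1 1 0, hnn 1 0 0 1 1 1, hnn 1 0 1 0 0 0, hnn 1 0 1 0 0 1, hnn 1 0 1 0 1 0, hnn 1 0 1 0 1 1, hnn 1 0 1 1 0 0, hnn 1 0 1 1 0 1, hnn 1 0 1 1 1 0, hnn 1 0 1 1 1 1, hnn 1 1 0 0 0 0, hnn 1 1 0 0 0 1, hnn 1 1 0 0 1 0, hnn 1 1 0 0 1 1, hnn 1 1 0 1 0 0, hnn 1 1 0 1 0 1, hnn 1 1 0 1 1 0, hnn 1 1 0 1 1 1, hnn 1 1 1 0 0 0, hnn 1 1 1 0 0 1, hnn 1 1 1 0 1 0, hnn 1 1 1 0 1 1, hnn 1 1 1 1 0 0, hnn 1 1 1 1 0 1, hnn 1 1 1 1 1 0, hnn 1 1 1 1 1 1]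
end
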